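/- If Spark(A₁) = s₁ and Spark(A₂) = s₂ and k < min(s₁, s₂)/2, then any two k-sparse solutions of (A₂ ⊗ A₁)c = y coincide; i.e., k-sparse recovery from Kronecker-structured measurements is unique whenever 2k is less than the minimum of the Sparks of the factors. -/

import Mathlib

open Kronecker

/-- ℓ0 "norm": number of nonzero entries. -/
noncomputable def l0 {ι : Type*} [Fintype ι] (η : ι → ℝ) : ℕ :=
  (Finset.univ.filter fun j => η j ≠ 0).card

/-- Spark of a matrix, valued in `ℕ∞` (equal to `⊤` when the nullspace is trivial). -/
noncomputable def spark {μ ι : Type*} [Fintype μ] [Fintype ι]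
    (A : Matrix μ ι ℝ) : ℕ∞ :=
  sInf {n : ℕ∞ | ∃ η : ι → ℝ, A.mulVec η = 0 ∧ η ≠ 0 ∧ n = (l0 η : ℕ∞)}

/-!
Write a kernel vector `η ≠ 0` of `A₂ ⊗ₖ A₁` as `vec X`, so that `A₁ * X * A₂ᵀ = 0`. If `A₁ * X = 0`,
a nonzero column of `X` is a kernel vector of `A₁`; otherwise a nonzero row of `A₁ * X` is a kernel
vector of `A₂`, supported on the nonzero columns of `X`. Either way `‖η‖₀ ≥ min (spark A₁) (spark A₂)`,
so `spark (A₂ ⊗ₖ A₁) ≥ min (spark A₁) (spark A₂)`, and the usual argument applied to `c₁ - c₂`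
gives uniqueness of `k`-sparse solutions when `2k` is below the spark.
-/

open Matrix

section Sparsity

variable {ι κ μ : Type*} [Fintype ι] [Fintype κ] [Fintype μ]

theorem spark_le_l0 (A : Matrix μ ι ℝ) {η : ι → ℝ} (hη : A *ᵥ η = 0) (hne : η ≠ 0) :
    spark A ≤ l0 η :=
  sInf_le ⟨η, hη, hne, rfl⟩

theorem l0_sub_le (c₁ c₂ : ι → ℝ) : l0 (c₁ - c₂) ≤ l0 c₁ + l0 c₂ := by
  classical
  refine (Finset.card_le_card fun j hj => ?_).trans (Finset.card_union_le _ _)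
  simp only [Finset.mem_filter, Finset.mem_union, Finset.mem_univ, true_and, Pi.sub_apply] at hj ⊢
  by_contra! h
  exact hj (by rw [h.1, h.2, sub_zero])

theorem l0_le_l0_of_support_subset_image {f : κ → ℝ} {g : ι → ℝ} (e : ι → κ)
    (h : Function.support f ⊆ e '' Function.support g) : l0 f ≤ l0 g := by
  classical
  refine (Finset.card_le_card fun a ha => ?_).trans (Finset.card_image_le (f := e))
  simp only [Finset.mem_filter, Finset.mem_univ, true_and] at ha
  obtain ⟨b, hb, rfl⟩ := h ha
  exact Finset.mem_image_of_mem e (Finset.mem_filter.mpr ⟨Finset.mem_univ b, hb⟩)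

theorem eq_of_mulVec_eq_of_two_mul_lt_spark {A : Matrix μ ι ℝ} {k : ℕ}
    (hk : (2 * k : ℕ∞) < spark A) {c₁ c₂ : ι → ℝ} (hc₁ : l0 c₁ ≤ k) (hc₂ : l0 c₂ ≤ k)
    (heq : A *ᵥ c₁ = A *ᵥ c₂) : c₁ = c₂ := by
  by_contra hne
  have hspark := spark_le_l0 A (by rw [mulVec_sub, heq, sub_self]) (sub_ne_zero.mpr hne)
  have hl0 : l0 (c₁ - c₂) ≤ 2 * k := (l0_sub_le c₁ c₂).trans (by omega)
  exact (hk.trans_le hspark).not_ge (by exact_mod_cast hl0)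

end Sparsity

theorem min_spark_le_spark_kronecker {μ₁ ι₁ μ₂ ι₂ : Type*} [Fintype μ₁] [Fintype ι₁]
    [Fintype μ₂] [Fintype ι₂] (A₁ : Matrix μ₁ ι₁ ℝ) (A₂ : Matrix μ₂ ι₂ ℝ) :
    min (spark A₁) (spark A₂) ≤ spark (A₂ ⊗ₖ A₁) := by
  refine le_sInf ?_
  rintro _ ⟨η, hη, hne, rfl⟩
  set X : Matrix ι₁ ι₂ ℝ := of fun j₁ j₂ => η (j₂, j₁)
  have hηX : η = vec X := rfl
  have hX : X ≠ 0 := fun h => hne (by rw [hηX, h, vec_zero])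
  have hker : A₁ * X * A₂ᵀ = 0 := by rwa [hηX, kronecker_mulVec_vec, vec_eq_zero_iff] at hη
  by_cases hY : A₁ * X = 0
  · obtain ⟨j₂, hj₂⟩ : ∃ j₂, Xᵀ j₂ ≠ 0 := by
      by_contra! h
      exact hX (transpose_eq_zero.mp (funext h))
    have hcol : A₁ *ᵥ Xᵀ j₂ = 0 := congrFun (congrArg transpose hY) j₂
    refine min_le_of_left_le ((spark_le_l0 A₁ hcol hj₂).trans ?_)
    exact Nat.cast_le.mpr (l0_le_l0_of_support_subset_image (g := η) Prod.snd
      fun j₁ hj₁ => ⟨(j₂, j₁), hj₁, rfl⟩)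
  · obtain ⟨i₁, hi₁⟩ : ∃ i₁, (A₁ * X) i₁ ≠ 0 := by
      by_contra! h
      exact hY (funext h)
    have hrow : A₂ *ᵥ (A₁ * X) i₁ = 0 := by
      rw [← vecMul_transpose, ← mul_apply_eq_vecMul, hker]
      rfl
    refine min_le_of_right_le ((spark_le_l0 A₂ hrow hi₁).trans ?_)
    refine Nat.cast_le.mpr (l0_le_l0_of_support_subset_image Prod.fst fun j₂ hj₂ => ?_)
    by_contra! h
    refine hj₂ (Finset.sum_eq_zero fun j₁ _ => ?_)
    have : η (j₂, j₁) = 0 := by_contra fun hj => h ⟨(j₂, j₁), hj, rfl⟩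
    simp [X, this]

theorem kron_sparse_recovery_unique {m₁ n₁ m₂ n₂ k : ℕ}
    (A₁ : Matrix (Fin m₁) (Fin n₁) ℝ) (A₂ : Matrix (Fin m₂) (Fin n₂) ℝ)
    (s₁ s₂ : ℕ∞) (h₁ : spark A₁ = s₁) (h₂ : spark A₂ = s₂)
    (hk : (2 * k : ℕ∞) < min s₁ s₂) :
    ∀ c₁ c₂ : Fin n₂ × Fin n₁ → ℝ, l0 c₁ ≤ k → l0 c₂ ≤ k →
      (A₂ ⊗ₖ A₁).mulVec c₁ = (A₂ ⊗ₖ A₁).mulVec c₂ → c₁ = c₂ := by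
  subst h₁ h₂
  exact fun c₁ c₂ => eq_of_mulVec_eq_of_two_mul_lt_spark
    (hk.trans_le (min_spark_le_spark_kronecker A₁ A₂))
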